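/- arXiv:2201.12247 — 2 statements merged into one kernel-verified Lean document; each statement's English description precedes it below -/
import Mathlib

section
/- Let F : ℝ^d → ℝ^d be L-Lipschitz with L > 0, and let (a_k)_{k≥0} be the step sizes generated by the adaptive EG+ method with parameters τ ∈ (0,1), 0 < γ ≤ 1, starting point ū₀ and initial step size a₀ > 0. Then (a_k) converges to a limit a_∞ ≥ min{a₀, τ/L} > 0, and there exists k₀ ∈ ℕ such that a_k ≤ a_{k+1}/τ for all k ≥ k₀. -/
/-!
The Lipschitz bound `‖F u - F ū‖ ≤ L ‖u - ū‖` makes the candidate step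
`τ ‖u - ū‖ / ‖F u - F ū‖` at least `τ / L`, so each step size lies between the minimum of the
previous one and `τ / L` and the previous one. Hence `(a_k)` is nonincreasing and stays above
`min a₀ (τ / L) > 0`, so it converges to a positive limit `a_∞`. Since `a_∞ < a_∞ / τ`,
eventually `a_k < a_∞ / τ ≤ a_{k+1} / τ`.
-/

open Filter Topology

section MonotoneStepSizes

variable {a : ℕ → ℝ} {c : ℝ}

lemma min_le_of_forall_min_le_succ (h : ∀ k, min (a k) c ≤ a (k + 1)) (k : ℕ) :
    min (a 0) c ≤ a k := by
  induction k with
  | zero => exact min_le_left _ _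
  | succ k ih => exact (le_min ih (min_le_right _ _)).trans (h k)

lemma eventually_le_succ_div_of_tendsto {l τ : ℝ} (hlim : Tendsto a atTop (𝓝 l)) (hl : 0 < l)
    (hτ0 : 0 < τ) (hτ1 : τ < 1) (hle : ∀ k, l ≤ a k) :
    ∀ᶠ k in atTop, a k ≤ a (k + 1) / τ := by
  have hl_lt : l < l / τ := by rwa [lt_div_iff₀ hτ0, mul_lt_iff_lt_one_right hl]
  filter_upwards [hlim.eventually (eventually_lt_nhds hl_lt)] with k hk
  exact hk.le.trans (by gcongr; exact hle (k + 1))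

theorem exists_tendsto_of_succ_mem_Icc_min {τ : ℝ}
    (hstep : ∀ k, a (k + 1) ∈ Set.Icc (min (a k) c) (a k))
    (hlb : 0 < min (a 0) c) (hτ0 : 0 < τ) (hτ1 : τ < 1) :
    ∃ l, Tendsto a atTop (𝓝 l) ∧ min (a 0) c ≤ l ∧
      ∃ k₀, ∀ k ≥ k₀, a k ≤ a (k + 1) / τ := by
  have hanti : Antitone a := antitone_nat_of_succ_le fun k => (hstep k).2
  have hbound := min_le_of_forall_min_le_succ fun k => (hstep k).1
  have hlim := tendsto_atTop_ciInf hanti ⟨_, Set.forall_mem_range.2 hbound⟩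
  have hl : min (a 0) c ≤ ⨅ k, a k := ge_of_tendsto' hlim hbound
  refine ⟨_, hlim, hl, eventually_atTop.1 ?_⟩
  exact eventually_le_succ_div_of_tendsto hlim (hlb.trans_le hl) hτ0 hτ1
    (hanti.le_of_tendsto hlim)

end MonotoneStepSizes

lemma div_le_mul_div_of_le_mul {L τ p q : ℝ} (hL : 0 < L) (hq : 0 < q) (hτ : 0 ≤ τ)
    (h : q ≤ L * p) : τ / L ≤ τ * p / q := by
  rw [div_le_div_iff₀ hL hq]
  nlinarith

lemma adaptive_step_succ_mem_Icc {E : Type*} [NormedAddCommGroup E] {F : E → E} {L τ : ℝ}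
    (hL : 0 < L) (hLip : ∀ u v, ‖F u - F v‖ ≤ L * ‖u - v‖) (hτ : 0 ≤ τ)
    {u ubar : ℕ → E} {a : ℕ → ℝ}
    (hstep_eq : ∀ k, F (u k) = F (ubar k) → a (k + 1) = a k)
    (hstep_ne : ∀ k, F (u k) ≠ F (ubar k) →
      a (k + 1) = min (a k) (τ * ‖u k - ubar k‖ / ‖F (u k) - F (ubar k)‖))
    (k : ℕ) : a (k + 1) ∈ Set.Icc (min (a k) (τ / L)) (a k) := by
  by_cases hF : F (u k) = F (ubar k)
  · rw [hstep_eq k hF]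
    exact ⟨min_le_left _ _, le_rfl⟩
  · rw [hstep_ne k hF]
    have hFpos : 0 < ‖F (u k) - F (ubar k)‖ := norm_pos_iff.2 (sub_ne_zero.2 hF)
    exact ⟨min_le_min_left _ (div_le_mul_div_of_le_mul hL hFpos hτ (hLip _ _)),
      min_le_left _ _⟩

theorem adaptive_eg_plus_step_size_converges_general (d : ℕ)
    (F : EuclideanSpace ℝ (Fin d) → EuclideanSpace ℝ (Fin d))
    (L τ : ℝ)
    (hL : 0 < L) (hLip : ∀ u v, ‖F u - F v‖ ≤ L * ‖u - v‖)
    (hτ0 : 0 < τ) (hτ1 : τ < 1)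
    (u ubar : ℕ → EuclideanSpace ℝ (Fin d)) (a : ℕ → ℝ)
    (ha0 : 0 < a 0)
    (hstep_eq : ∀ k : ℕ, F (u k) = F (ubar k) → a (k + 1) = a k)
    (hstep_ne : ∀ k : ℕ, F (u k) ≠ F (ubar k) →
      a (k + 1) = min (a k) (τ * ‖u k - ubar k‖ / ‖F (u k) - F (ubar k)‖)) :
    ∃ ainf : ℝ, Filter.Tendsto a Filter.atTop (nhds ainf) ∧
      min (a 0) (τ / L) ≤ ainf ∧ 0 < min (a 0) (τ / L) ∧
      ∃ k₀ : ℕ, ∀ k : ℕ, k ≥ k₀ → a k ≤ a (k + 1) / τ := by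
  have hpos : 0 < min (a 0) (τ / L) := lt_min ha0 (div_pos hτ0 hL)
  have hstep := adaptive_step_succ_mem_Icc hL hLip hτ0.le hstep_eq hstep_ne
  obtain ⟨ainf, hlim, hle, hk₀⟩ := exists_tendsto_of_succ_mem_Icc_min hstep hpos hτ0 hτ1
  exact ⟨ainf, hlim, hle, hpos, hk₀⟩

theorem adaptive_eg_plus_step_size_converges (d : ℕ)
    (F : EuclideanSpace ℝ (Fin d) → EuclideanSpace ℝ (Fin d))
    (L τ γ : ℝ)
    (hL : 0 < L) (hLip : ∀ u v, ‖F u - F v‖ ≤ L * ‖u - v‖)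
    (hτ0 : 0 < τ) (hτ1 : τ < 1) (hγ0 : 0 < γ) (hγ1 : γ ≤ 1)
    (u ubar : ℕ → EuclideanSpace ℝ (Fin d)) (a : ℕ → ℝ)
    (ha0 : 0 < a 0)
    (hstep_eq : ∀ k : ℕ, F (u k) = F (ubar k) → a (k + 1) = a k)
    (hstep_ne : ∀ k : ℕ, F (u k) ≠ F (ubar k) →
      a (k + 1) = min (a k) (τ * ‖u k - ubar k‖ / ‖F (u k) - F (ubar k)‖))
    (hu : ∀ k : ℕ, u k = ubar k - a k • F (ubar k))
    (hubar : ∀ k : ℕ, ubar (k + 1) = ubar k - (a k * γ) • F (u k)) :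
    ∃ ainf : ℝ, Filter.Tendsto a Filter.atTop (nhds ainf) ∧
      min (a 0) (τ / L) ≤ ainf ∧ 0 < min (a 0) (τ / L) ∧
      ∃ k₀ : ℕ, ∀ k : ℕ, k ≥ k₀ → a k ≤ a (k + 1) / τ :=
  adaptive_eg_plus_step_size_converges_general d F L τ hL hLip hτ0 hτ1 u ubar a ha0 hstep_eq
    hstep_ne
end

section
/- Let F : ℝ^d → ℝ^d have a weak Minty solution u* with parameter ρ > 0, and let (u_k, ū_k, a_k) be generated by the adaptive EG+ method with parameters τ ∈ (0,1), 0 < γ ≤ 1, starting point ū₀ and initial step size a₀ > 0. If k₀ ≤ k are indices such that a_i ≤ a_{i+1}/τ for all i with k₀ ≤ i ≤ k, then (1/γ)·‖ū_{k+1} − u*‖² + Σ_{i=k₀}^{k} a_i·(a_i·γ·(1 − γ) − ρ)·‖F(u_i)‖² ≤ (1/γ)·‖ū_{k₀} − u*‖². -/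
/-!
The step-size rule, combined with `τ a_i ≤ a_{i+1}`, forces
`‖F u_i - F ū_i‖ ≤ ‖F ū_i‖`, i.e. `⟪F u_i, F ū_i⟫ ≥ ‖F u_i‖² / 2`. Together with the weak Minty
inequality at `u_i` this bounds `⟪F u_i, ū_i - u*⟫` from below by `(a_i - ρ) / 2 · ‖F u_i‖²`, and
expanding `‖ū_{i+1} - u*‖²` gives a one-step descent inequality, which telescopes over `[k₀, k]`.
-/

open scoped RealInnerProductSpace

open Finset

theorem half_norm_sq_le_inner_of_norm_sub_le {E : Type*} [NormedAddCommGroup E]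
    [InnerProductSpace ℝ E] {x y : E} (h : ‖x - y‖ ≤ ‖y‖) : ‖x‖ ^ 2 / 2 ≤ ⟪x, y⟫ := by
  have hsq : ‖x - y‖ ^ 2 ≤ ‖y‖ ^ 2 := pow_le_pow_left₀ (norm_nonneg _) h 2
  rw [norm_sub_sq_real] at hsq
  linarith

theorem add_sum_Icc_le_of_forall_add_le (V c : ℕ → ℝ) {k₀ k : ℕ} (hk : k₀ ≤ k)
    (h : ∀ i, k₀ ≤ i → i ≤ k → V (i + 1) + c i ≤ V i) :
    V (k + 1) + ∑ i ∈ Icc k₀ k, c i ≤ V k₀ := by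
  induction k, hk using Nat.le_induction with
  | base => simpa using h k₀ le_rfl le_rfl
  | succ n hn ih =>
    rw [sum_Icc_succ_top (Nat.le_succ_of_le hn)]
    have hstep := h (n + 1) (Nat.le_succ_of_le hn) le_rfl
    have hprev := ih fun i hi hin => h i hi (Nat.le_succ_of_le hin)
    linarith

theorem adaptive_step_pos {E G : Type*} [NormedAddCommGroup E] [NormedAddCommGroup G]
    (F : E → G) {τ : ℝ} (hτ : 0 < τ) {u ubar : ℕ → E} {a : ℕ → ℝ} (ha0 : 0 < a 0)
    (hstep_eq : ∀ k : ℕ, F (u k) = F (ubar k) → a (k + 1) = a k)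
    (hstep_ne : ∀ k : ℕ, F (u k) ≠ F (ubar k) →
      a (k + 1) = min (a k) (τ * ‖u k - ubar k‖ / ‖F (u k) - F (ubar k)‖)) (k : ℕ) :
    0 < a k := by
  induction k with
  | zero => exact ha0
  | succ n ih =>
    by_cases hFeq : F (u n) = F (ubar n)
    · rwa [hstep_eq n hFeq]
    have hune : u n ≠ ubar n := fun h => hFeq (congrArg F h)
    rw [hstep_ne n hFeq]
    exact lt_min ih (div_pos (mul_pos hτ (norm_pos_iff.mpr (sub_ne_zero.mpr hune)))
      (norm_pos_iff.mpr (sub_ne_zero.mpr hFeq)))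

theorem norm_apply_sub_le_of_step_le {E : Type*} [NormedAddCommGroup E] [NormedSpace ℝ E]
    (F : E → E) {τ a a' : ℝ} {x u : E} (hτ : 0 < τ) (ha : 0 < a)
    (hu : u = x - a • F x) (hτa : a * τ ≤ a')
    (hstep : F u ≠ F x → a' ≤ τ * ‖u - x‖ / ‖F u - F x‖) :
    ‖F u - F x‖ ≤ ‖F x‖ := by
  by_cases hFeq : F u = F x
  · simp [hFeq]
  have hΔ : 0 < ‖F u - F x‖ := norm_pos_iff.mpr (sub_ne_zero.mpr hFeq)
  have hux : ‖u - x‖ = a * ‖F x‖ := by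
    rw [hu, sub_sub_cancel_left, norm_neg, norm_smul, Real.norm_of_nonneg ha.le]
  have ha' : 0 < a' := (mul_pos ha hτ).trans_le hτa
  have hbound := hstep hFeq
  rw [le_div_iff₀ hΔ, hux] at hbound
  refine le_of_mul_le_mul_left ?_ ha'
  calc a' * ‖F u - F x‖ ≤ τ * (a * ‖F x‖) := hbound
    _ = a * τ * ‖F x‖ := by ring
    _ ≤ a' * ‖F x‖ := by gcongr

theorem eg_plus_step_descent {E : Type*} [NormedAddCommGroup E] [InnerProductSpace ℝ E]
    (F : E → E) {ρ γ a : ℝ} {x u x' ustar : E} (hγ : 0 < γ) (ha : 0 ≤ a)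
    (hu : u = x - a • F x) (hx' : x' = x - (a * γ) • F u)
    (hweak : ⟪F u, u - ustar⟫ ≥ -(ρ / 2) * ‖F u‖ ^ 2) (hF : ‖F u - F x‖ ≤ ‖F x‖) :
    (1 / γ) * ‖x' - ustar‖ ^ 2 + a * (a * γ * (1 - γ) - ρ) * ‖F u‖ ^ 2
      ≤ (1 / γ) * ‖x - ustar‖ ^ 2 := by
  have hcorr := half_norm_sq_le_inner_of_norm_sub_le hF
  have hinner : ⟪F u, x - ustar⟫ = ⟪F u, u - ustar⟫ + a * ⟪F u, F x⟫ := by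
    rw [← real_inner_smul_right, ← inner_add_right, hu]
    abel_nf
  have hlower : (a - ρ) / 2 * ‖F u‖ ^ 2 ≤ ⟪F u, x - ustar⟫ := by
    rw [hinner]
    nlinarith [mul_le_mul_of_nonneg_left hcorr ha]
  have hexpand : ‖x' - ustar‖ ^ 2
      = ‖x - ustar‖ ^ 2 - 2 * (a * γ) * ⟪F u, x - ustar⟫ + (a * γ) ^ 2 * ‖F u‖ ^ 2 := by
    rw [hx', sub_right_comm, norm_sub_sq_real, real_inner_smul_right, norm_smul, mul_pow,
      Real.norm_eq_abs, sq_abs, real_inner_comm]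
    ring
  -- the slack is `γ a² (1 - γ)² ‖F u‖²`
  have hscaled : ‖x' - ustar‖ ^ 2 + γ * (a * (a * γ * (1 - γ) - ρ) * ‖F u‖ ^ 2)
      ≤ ‖x - ustar‖ ^ 2 := by
    have hslack : 0 ≤ γ * a ^ 2 * (1 - γ) ^ 2 * ‖F u‖ ^ 2 := by positivity
    nlinarith [mul_le_mul_of_nonneg_left hlower (by positivity : 0 ≤ 2 * (a * γ))]
  calc (1 / γ) * ‖x' - ustar‖ ^ 2 + a * (a * γ * (1 - γ) - ρ) * ‖F u‖ ^ 2
      = (1 / γ) * (‖x' - ustar‖ ^ 2 + γ * (a * (a * γ * (1 - γ) - ρ) * ‖F u‖ ^ 2)) := by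
        field_simp
    _ ≤ (1 / γ) * ‖x - ustar‖ ^ 2 := by gcongr

theorem adaptive_eg_plus_telescoped_general (d : ℕ)
    (F : EuclideanSpace ℝ (Fin d) → EuclideanSpace ℝ (Fin d))
    (ρ τ γ : ℝ) (ustar : EuclideanSpace ℝ (Fin d))
    (hweak : ∀ u, ⟪F u, u - ustar⟫ ≥ -(ρ / 2) * ‖F u‖ ^ 2)
    (hτ0 : 0 < τ) (hγ0 : 0 < γ)
    (u ubar : ℕ → EuclideanSpace ℝ (Fin d)) (a : ℕ → ℝ)
    (ha0 : 0 < a 0)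
    (hstep_eq : ∀ k : ℕ, F (u k) = F (ubar k) → a (k + 1) = a k)
    (hstep_ne : ∀ k : ℕ, F (u k) ≠ F (ubar k) →
      a (k + 1) = min (a k) (τ * ‖u k - ubar k‖ / ‖F (u k) - F (ubar k)‖))
    (hu : ∀ k : ℕ, u k = ubar k - a k • F (ubar k))
    (hubar : ∀ k : ℕ, ubar (k + 1) = ubar k - (a k * γ) • F (u k))
    (k₀ k : ℕ) (hk : k₀ ≤ k)
    (hratio : ∀ i : ℕ, k₀ ≤ i → i ≤ k → a i ≤ a (i + 1) / τ) :
    (1 / γ) * ‖ubar (k + 1) - ustar‖ ^ 2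
        + ∑ i ∈ Finset.Icc k₀ k, a i * (a i * γ * (1 - γ) - ρ) * ‖F (u i)‖ ^ 2
      ≤ (1 / γ) * ‖ubar k₀ - ustar‖ ^ 2 := by
  have hpos := adaptive_step_pos F hτ0 ha0 hstep_eq hstep_ne
  refine add_sum_Icc_le_of_forall_add_le (fun i => (1 / γ) * ‖ubar i - ustar‖ ^ 2) _ hk
    fun i hi hik => ?_
  have hF : ‖F (u i) - F (ubar i)‖ ≤ ‖F (ubar i)‖ :=
    norm_apply_sub_le_of_step_le F hτ0 (hpos i) (hu i)
      ((le_div_iff₀ hτ0).mp (hratio i hi hik))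
      fun hne => (hstep_ne i hne).trans_le (min_le_right _ _)
  exact eg_plus_step_descent F hγ0 (hpos i).le (hu i) (hubar i) (hweak (u i)) hF

theorem adaptive_eg_plus_telescoped (d : ℕ)
    (F : EuclideanSpace ℝ (Fin d) → EuclideanSpace ℝ (Fin d))
    (ρ τ γ : ℝ) (ustar : EuclideanSpace ℝ (Fin d))
    (hρ : 0 < ρ)
    (hweak : ∀ u, ⟪F u, u - ustar⟫ ≥ -(ρ / 2) * ‖F u‖ ^ 2)
    (hτ0 : 0 < τ) (hτ1 : τ < 1) (hγ0 : 0 < γ) (hγ1 : γ ≤ 1)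
    (u ubar : ℕ → EuclideanSpace ℝ (Fin d)) (a : ℕ → ℝ)
    (ha0 : 0 < a 0)
    (hstep_eq : ∀ k : ℕ, F (u k) = F (ubar k) → a (k + 1) = a k)
    (hstep_ne : ∀ k : ℕ, F (u k) ≠ F (ubar k) →
      a (k + 1) = min (a k) (τ * ‖u k - ubar k‖ / ‖F (u k) - F (ubar k)‖))
    (hu : ∀ k : ℕ, u k = ubar k - a k • F (ubar k))
    (hubar : ∀ k : ℕ, ubar (k + 1) = ubar k - (a k * γ) • F (u k))
    (k₀ k : ℕ) (hk : k₀ ≤ k)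
    (hratio : ∀ i : ℕ, k₀ ≤ i → i ≤ k → a i ≤ a (i + 1) / τ) :
    (1 / γ) * ‖ubar (k + 1) - ustar‖ ^ 2
        + ∑ i ∈ Finset.Icc k₀ k, a i * (a i * γ * (1 - γ) - ρ) * ‖F (u i)‖ ^ 2
      ≤ (1 / γ) * ‖ubar k₀ - ustar‖ ^ 2 :=
  adaptive_eg_plus_telescoped_general d F ρ τ γ ustar hweak hτ0 hγ0 u ubar a ha0 hstep_eq hstep_ne
    hu hubar k₀ k hk hratio
end
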